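/- For every digraph G on n vertices, D_0(G) ≥ log* n − log* log* n − 1 (equivalently, D_0(G) + log* log* n + 1 ≥ log* n). -/

import Mathlib

namespace PaperFO

/-- First-order formulas in a language with equality `eq` and one binary
relation symbol `rel` (adjacency `~` for graphs, the arc relation `↦` for
digraphs).  Variables are indexed by natural numbers (variable `xᵢ` of the
paper corresponds to `i - 1 : ℕ`). -/
inductive Fml : Type
  | eq : ℕ → ℕ → Fml
  | rel : ℕ → ℕ → Fml
  | not : Fml → Fml
  | and : Fml → Fml → Fml
  | or : Fml → Fml → Fml
  | all : ℕ → Fml → Fml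
  | ex : ℕ → Fml → Fml

namespace Fml

/-- Truth of a formula in the structure `(V, r)` under the assignment `σ`. -/
def eval {V : Type} (r : V → V → Prop) (σ : ℕ → V) : Fml → Prop
  | eq i j => σ i = σ j
  | rel i j => r (σ i) (σ j)
  | not φ => ¬ eval r σ φ
  | and φ ψ => eval r σ φ ∧ eval r σ ψ
  | or φ ψ => eval r σ φ ∨ eval r σ ψ
  | all i φ => ∀ v : V, eval r (Function.update σ i v) φ
  | ex i φ => ∃ v : V, eval r (Function.update σ i v) φ

/-- The free variables of a formula. -/
def freeVars : Fml → Finset ℕ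
  | eq i j => {i, j}
  | rel i j => {i, j}
  | not φ => freeVars φ
  | and φ ψ => freeVars φ ∪ freeVars ψ
  | or φ ψ => freeVars φ ∪ freeVars ψ
  | all i φ => (freeVars φ).erase i
  | ex i φ => (freeVars φ).erase i

/-- A sentence is a formula without free variables. -/
def IsSentence (φ : Fml) : Prop := φ.freeVars = ∅

/-- The quantifier depth (= quantifier rank) of a formula: the maximum
number of nested quantifiers. -/
def depth : Fml → ℕ
  | eq _ _ => 0
  | rel _ _ => 0
  | not φ => depth φ
  | and φ ψ => max (depth φ) (depth ψ)
  | or φ ψ => max (depth φ) (depth ψ)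
  | all _ φ => depth φ + 1
  | ex _ φ => depth φ + 1

/-- A formula is atomic if it is of the form `x = y` or `x ~ y`. -/
def IsAtomic : Fml → Prop
  | eq _ _ => True
  | rel _ _ => True
  | _ => False

/-- Negations occur only in front of atomic subformulas. -/
def NegAtomic : Fml → Prop
  | eq _ _ => True
  | rel _ _ => True
  | not φ => IsAtomic φ
  | and φ ψ => NegAtomic φ ∧ NegAtomic ψ
  | or φ ψ => NegAtomic φ ∧ NegAtomic ψ
  | all _ φ => NegAtomic φ
  | ex _ φ => NegAtomic φ

/-- The set of maximal sequences of nested quantifiers of a formula,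
recorded as lists of Booleans read from the outermost quantifier inwards
(`true` = `∃`, `false` = `∀`).  Every sequence of nested quantifiers of the
formula is a (contiguous) subsequence of one of these. -/
def qstrings : Fml → Set (List Bool)
  | eq _ _ => {[]}
  | rel _ _ => {[]}
  | not φ => qstrings φ
  | and φ ψ => qstrings φ ∪ qstrings ψ
  | or φ ψ => qstrings φ ∪ qstrings ψ
  | all _ φ => (List.cons false) '' qstrings φ
  | ex _ φ => (List.cons true) '' qstrings φ

end Fml

/-- The number of quantifier alternations (occurrences of `∀∃` or `∃∀`) in a
sequence of nested quantifiers. -/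
def altCount : List Bool → ℕ
  | [] => 0
  | [_] => 0
  | a :: b :: l => (if a = b then 0 else 1) + altCount (b :: l)

namespace Fml

/-- Every sequence of nested quantifiers has at most `a` quantifier
alternations. -/
def AltLe (φ : Fml) (a : ℕ) : Prop := ∀ s ∈ φ.qstrings, altCount s ≤ a

/-- An `a`-alternating formula: negations occur only in front of atomic
subformulas and every sequence of nested quantifiers has at most `a`
quantifier alternations. -/
def AltFml (a : ℕ) (φ : Fml) : Prop := φ.NegAtomic ∧ φ.AltLe a

/-- A 0-alternating formula: negations occur only in front of atomic
subformulas and no sequence of nested quantifiers contains a quantifier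
alternation. -/
def ZeroAlt (φ : Fml) : Prop := φ.NegAtomic ∧ φ.AltLe 0

end Fml

/-- `logStar n` is the minimum number of iterations of the binary logarithm
needed to bring `n` to `1` or below. -/
def logStar (n : ℕ) : ℕ :=
  if h : n ≤ 1 then 0 else logStar (Nat.log 2 n) + 1
decreasing_by exact Nat.log_lt_self 2 (by omega)

/-- The tower function: `tower 0 = 1`, `tower (i+1) = 2 ^ tower i`. -/
def tower : ℕ → ℕ
  | 0 => 1
  | i + 1 => 2 ^ tower i

end PaperFO

namespace PaperFO

/-- A sentence is true on the digraph `(V, r)` (digraphs interpret `Fml.rel`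
as the arc relation `↦`). -/
def DModels {V : Type} (r : V → V → Prop) (φ : Fml) : Prop :=
  ∀ σ : ℕ → V, φ.eval r σ

/-- Isomorphism of digraphs. -/
def DIso {V W : Type} (r : V → V → Prop) (r' : W → W → Prop) : Prop :=
  ∃ e : V ≃ W, ∀ a b : V, r a b ↔ r' (e a) (e b)

/-- The sentence `φ` defines the digraph `(V, r)`: it is a sentence, it is
true on `(V, r)`, and it fails on every (finite, nonempty) digraph not
isomorphic to `(V, r)`. -/
def DDefines {V : Type} (r : V → V → Prop) (φ : Fml) : Prop :=
  φ.IsSentence ∧ DModels r φ ∧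
    ∀ (W : Type) (_ : Fintype W) (_ : Nonempty W) (r' : W → W → Prop),
      ¬ DIso r r' → ¬ DModels r' φ

end PaperFO

namespace PaperFO

/-!
A 0-alternating sentence is a positive Boolean combination of existential and universal
sentences. Universal sentences pass to induced subdigraphs. An existential sentence of
depth `d` passes to every induced subdigraph containing the vertices chosen by the
following strategy for the `d`-round game: at each reachable position and for each
rank type of a one-point extension, keep one vertex realizing it. The number of rank-`k`
types of `j`-tuples is a tower of height `k + 1`, so at most about a tower of height `d`
vertices are kept. If `n` exceeded that number plus one, deleting a vertex that is not
kept would give a smaller digraph satisfying the sentence. So `n` is at most a tower of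
`d` twos topped by a polynomial in `d`, whence `log* n ≤ d + log* d + O(1)`; when
`log* n > d + 1` the term `log* d` is at most `log* log* n`.
-/

open Finset

def expIter : ℕ → ℕ → ℕ
  | 0, m => m
  | k + 1, m => 2 ^ expIter k m

theorem expIter_succ' (k m : ℕ) : expIter (k + 1) m = expIter k (2 ^ m) := by
  induction k with
  | zero => rfl
  | succ k ih => exact congrArg (2 ^ ·) ih

theorem one_le_expIter (k : ℕ) {m : ℕ} (hm : 1 ≤ m) : 1 ≤ expIter k m := by
  cases k with
  | zero => exact hm
  | succ k => exact Nat.one_le_two_pow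

theorem expIter_mono_right (k : ℕ) : Monotone (expIter k) := by
  induction k with
  | zero => exact fun _ _ h => h
  | succ k ih => exact fun _ _ h => Nat.pow_le_pow_right two_pos (ih h)

theorem expIter_mono_left (m : ℕ) : Monotone (expIter · m) :=
  monotone_nat_of_le_succ fun k => by
    induction k with
    | zero => exact Nat.lt_two_pow_self.le
    | succ k ih => exact Nat.pow_le_pow_right two_pos ih

theorem expIter_add_le (k m c : ℕ) : expIter k m + c ≤ expIter k (m + c) := by
  induction k with
  | zero => rfl
  | succ k ih =>
    calc 2 ^ expIter k m + c ≤ 2 ^ expIter k m * 2 ^ c := by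
          nlinarith [Nat.lt_two_pow_self (n := c), Nat.one_le_two_pow (n := expIter k m)]
      _ ≤ 2 ^ expIter k (m + c) := by
          rw [← pow_add]; exact Nat.pow_le_pow_right two_pos ih

theorem mul_expIter_add_le (k a b : ℕ) {x : ℕ} (hx : 1 ≤ x) :
    a * expIter k x + b ≤ expIter k ((a + b + 1) * x) := by
  cases k with
  | zero => show a * x + b ≤ (a + b + 1) * x; nlinarith
  | succ k =>
    calc a * 2 ^ expIter k x + b ≤ 2 ^ (a + b) * 2 ^ expIter k x := by
          nlinarith [Nat.lt_two_pow_self (n := a + b), Nat.one_le_two_pow (n := expIter k x)]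
      _ ≤ 2 ^ expIter k (x + (a + b)) := by
          rw [← pow_add, add_comm]; exact Nat.pow_le_pow_right two_pos (expIter_add_le ..)
      _ ≤ 2 ^ expIter k ((a + b + 1) * x) :=
          Nat.pow_le_pow_right two_pos (expIter_mono_right k (by nlinarith))

theorem mul_expIter_pow_add_one_le {k a x : ℕ} (ha : a ≤ k + 1) (hx : 1 ≤ x) :
    a * expIter k x ^ a + 1 ≤ expIter k ((2 * a + 1) * x) := by
  cases k with
  | zero =>
    interval_cases a <;> simp [expIter] <;> omega
  | succ k =>
    have hE := mul_expIter_add_le k a a hx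
    calc a * (2 ^ expIter k x) ^ a + 1 ≤ 2 ^ a * 2 ^ (expIter k x * a) := by
          rw [← pow_mul]
          nlinarith [Nat.lt_two_pow_self (n := a), Nat.one_le_two_pow (n := expIter k x * a)]
      _ ≤ 2 ^ expIter k ((2 * a + 1) * x) := by
          rw [← pow_add]; exact Nat.pow_le_pow_right two_pos (by rw [two_mul]; linarith)

theorem logStar_of_le_one {n : ℕ} (h : n ≤ 1) : logStar n = 0 := by
  rw [logStar, dif_pos h]

theorem logStar_of_one_lt {n : ℕ} (h : 1 < n) : logStar n = logStar (Nat.log 2 n) + 1 := by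
  rw [logStar, dif_neg (by omega)]

theorem logStar_le_logStar_log_add_one (n : ℕ) : logStar n ≤ logStar (Nat.log 2 n) + 1 := by
  rcases le_or_gt n 1 with h | h
  · simp [logStar_of_le_one h]
  · rw [logStar_of_one_lt h]

theorem logStar_mono : Monotone logStar := by
  intro m n h
  induction n using Nat.strong_induction_on generalizing m with
  | _ n ih =>
    rcases le_or_gt m 1 with hm | hm
    · simp [logStar_of_le_one hm]
    · rw [logStar_of_one_lt hm, logStar_of_one_lt (hm.trans_le h)]
      exact Nat.succ_le_succ (ih _ (Nat.log_lt_self 2 (by omega)) (Nat.log_mono_right h))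

theorem logStar_two_pow_le (m : ℕ) : logStar (2 ^ m) ≤ logStar m + 1 := by
  simpa [Nat.log_pow] using logStar_le_logStar_log_add_one (2 ^ m)

theorem logStar_expIter_le (k m : ℕ) : logStar (expIter k m) ≤ k + logStar m := by
  induction k with
  | zero => simp [expIter]
  | succ k ih => have := logStar_two_pow_le (expIter k m); simp only [expIter]; omega

theorem logStar_le_of_lt_two_pow {m b : ℕ} (h : m < 2 ^ (b + 1)) :
    logStar m ≤ logStar b + 1 := by
  rcases Nat.eq_zero_or_pos m with rfl | hm
  · simp [logStar_of_le_one]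
  · have := Nat.lt_succ_iff.mp ((Nat.log_lt_iff_lt_pow one_lt_two hm.ne').mpr h)
    exact (logStar_le_logStar_log_add_one m).trans (by gcongr; exact logStar_mono this)

theorem three_mul_sq_add_lt_two_pow (d : ℕ) : 3 * d ^ 2 + d + 1 < 2 ^ (d + 3) := by
  induction d with
  | zero => norm_num
  | succ d ih =>
    have := Nat.lt_two_pow_self (n := d)
    have h8 : 2 ^ (d + 1 + 3) = 2 * 2 ^ (d + 3) := by ring
    have h8' : 2 ^ (d + 3) = 8 * 2 ^ d := by ring
    nlinarith

theorem mul_expIter_pow_add_one_le_expIter (d : ℕ) :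
    d * expIter d (3 * d ^ 2) ^ d + 1 ≤ expIter d (3 * d ^ 2 + d + 1) := by
  cases d with
  | zero => simp [expIter]
  | succ k =>
    rw [expIter_succ', expIter_succ']
    refine (mul_expIter_pow_add_one_le le_rfl Nat.one_le_two_pow).trans (expIter_mono_right k ?_)
    calc (2 * (k + 1) + 1) * 2 ^ (3 * (k + 1) ^ 2)
        ≤ 2 ^ (k + 2) * 2 ^ (3 * (k + 1) ^ 2) := by
          have := Nat.lt_two_pow_self (n := k + 1)
          gcongr; rw [pow_succ]; omega
      _ = 2 ^ (3 * (k + 1) ^ 2 + (k + 1) + 1) := by rw [← pow_add]; ring_nf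

theorem eq_of_mem_of_altCount_eq_zero {a b : Bool} {l : List Bool}
    (h : altCount (a :: l) = 0) (hb : b ∈ a :: l) : b = a := by
  induction l generalizing a with
  | nil => simpa using hb
  | cons c l ih =>
    obtain ⟨hac, h⟩ : a = c ∧ altCount (c :: l) = 0 := by
      simp only [altCount] at h; split_ifs at h <;> simp_all
    subst hac
    rcases List.mem_cons.mp hb with rfl | hb
    · rfl
    · exact ih h hb

structure IsForthSystem {V W : Type} (r : V → V → Prop) (r' : W → W → Prop) (D : ℕ)
    (S : ∀ j, (Fin j → V) → (Fin j → W) → Prop) : Prop where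
  atomic {j : ℕ} {v : Fin j → V} {w : Fin j → W} : S j v w → ∀ a b : Fin j,
    (v a = v b ↔ w a = w b) ∧ (r (v a) (v b) ↔ r' (w a) (w b))
  forth {j : ℕ} {v : Fin j → V} {w : Fin j → W} : j < D → S j v w → ∀ x : V,
    ∃ y : W, S (j + 1) (Fin.snoc v x) (Fin.snoc w y)

namespace Fml

def IsExistential : Fml → Prop
  | eq _ _ | rel _ _ => True
  | not φ => φ.IsAtomic
  | and φ ψ | or φ ψ => φ.IsExistential ∧ ψ.IsExistential
  | all _ _ => False
  | ex _ φ => φ.IsExistential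

def IsUniversal : Fml → Prop
  | eq _ _ | rel _ _ => True
  | not φ => φ.IsAtomic
  | and φ ψ | or φ ψ => φ.IsUniversal ∧ ψ.IsUniversal
  | all _ φ => φ.IsUniversal
  | ex _ _ => False

theorem qstrings_nonempty (φ : Fml) : φ.qstrings.Nonempty := by
  induction φ with
  | eq | rel => exact ⟨[], rfl⟩
  | not _ ih => exact ih
  | and _ _ ih _ | or _ _ ih _ => exact ih.mono Set.subset_union_left
  | all _ _ ih | ex _ _ ih => exact ih.image _

theorem isExistential_of_qstrings {φ : Fml} (hna : φ.NegAtomic)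
    (h : ∀ s ∈ φ.qstrings, false ∉ s) : φ.IsExistential := by
  induction φ with
  | eq | rel | not => exact hna
  | and _ _ ih₁ ih₂ | or _ _ ih₁ ih₂ =>
    exact ⟨ih₁ hna.1 fun s hs => h s (.inl hs), ih₂ hna.2 fun s hs => h s (.inr hs)⟩
  | all _ ψ =>
    obtain ⟨s, hs⟩ := ψ.qstrings_nonempty
    exact h _ ⟨s, hs, rfl⟩ List.mem_cons_self
  | ex _ _ ih => exact ih hna fun s hs hf => h _ ⟨s, hs, rfl⟩ (List.mem_cons_of_mem _ hf)

theorem isUniversal_of_qstrings {φ : Fml} (hna : φ.NegAtomic)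
    (h : ∀ s ∈ φ.qstrings, true ∉ s) : φ.IsUniversal := by
  induction φ with
  | eq | rel | not => exact hna
  | and _ _ ih₁ ih₂ | or _ _ ih₁ ih₂ =>
    exact ⟨ih₁ hna.1 fun s hs => h s (.inl hs), ih₂ hna.2 fun s hs => h s (.inr hs)⟩
  | all _ _ ih => exact ih hna fun s hs hf => h _ ⟨s, hs, rfl⟩ (List.mem_cons_of_mem _ hf)
  | ex _ ψ =>
    obtain ⟨s, hs⟩ := ψ.qstrings_nonempty
    exact h _ ⟨s, hs, rfl⟩ List.mem_cons_self

theorem ZeroAlt.isExistential_ex {i : ℕ} {ψ : Fml} (h : (ex i ψ).ZeroAlt) :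
    (ex i ψ).IsExistential :=
  isExistential_of_qstrings h.1 fun _ ⟨s, hs, hs'⟩ hf => by
    subst hs'
    cases eq_of_mem_of_altCount_eq_zero (Nat.le_zero.mp (h.2 _ ⟨s, hs, rfl⟩)) hf

theorem ZeroAlt.isUniversal_all {i : ℕ} {ψ : Fml} (h : (all i ψ).ZeroAlt) :
    (all i ψ).IsUniversal :=
  isUniversal_of_qstrings h.1 fun _ ⟨s, hs, hs'⟩ hf => by
    subst hs'
    cases eq_of_mem_of_altCount_eq_zero (Nat.le_zero.mp (h.2 _ ⟨s, hs, rfl⟩)) hf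

variable {V W : Type} {r : V → V → Prop} {r' : W → W → Prop}

theorem IsAtomic.eval_iff {φ : Fml} (hφ : φ.IsAtomic) {σ : ℕ → V} {τ : ℕ → W}
    (h : ∀ i ∈ φ.freeVars, ∀ j ∈ φ.freeVars,
      (σ i = σ j ↔ τ i = τ j) ∧ (r (σ i) (σ j) ↔ r' (τ i) (τ j))) :
    φ.eval r σ ↔ φ.eval r' τ := by
  cases φ with
  | eq i j => exact (h i (by simp [freeVars]) j (by simp [freeVars])).1
  | rel i j => exact (h i (by simp [freeVars]) j (by simp [freeVars])).2
  | _ => exact hφ.elim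

theorem IsAtomic.eval_iff_of_embedding {e : W → V} (he : Function.Injective e)
    (hr : ∀ a b, r' a b ↔ r (e a) (e b)) {φ : Fml} (hφ : φ.IsAtomic) {σ : ℕ → V}
    {τ : ℕ → W} (hστ : ∀ i ∈ φ.freeVars, σ i = e (τ i)) : φ.eval r σ ↔ φ.eval r' τ :=
  hφ.eval_iff fun i hi j hj => by rw [hστ i hi, hστ j hj, he.eq_iff, hr]; exact ⟨.rfl, .rfl⟩

theorem IsUniversal.eval_of_embedding {e : W → V} (he : Function.Injective e)
    (hr : ∀ a b, r' a b ↔ r (e a) (e b)) {φ : Fml} (hφ : φ.IsUniversal) {σ : ℕ → V}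
    {τ : ℕ → W} (hστ : ∀ i ∈ φ.freeVars, σ i = e (τ i)) (hσ : φ.eval r σ) : φ.eval r' τ := by
  induction φ generalizing σ τ with
  | eq | rel => exact (IsAtomic.eval_iff_of_embedding he hr (by trivial) hστ).mp hσ
  | not ψ => exact mt (IsAtomic.eval_iff_of_embedding he hr hφ hστ).mpr hσ
  | and ψ χ ih₁ ih₂ =>
    exact ⟨ih₁ hφ.1 (fun i hi => hστ i (by simp [freeVars, hi])) hσ.1,
      ih₂ hφ.2 (fun i hi => hστ i (by simp [freeVars, hi])) hσ.2⟩
  | or ψ χ ih₁ ih₂ =>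
    exact hσ.imp (ih₁ hφ.1 fun i hi => hστ i (by simp [freeVars, hi]))
      (ih₂ hφ.2 fun i hi => hστ i (by simp [freeVars, hi]))
  | all i ψ ih =>
    refine fun b => ih hφ (fun i' hi' => ?_) (hσ (e b))
    by_cases h : i' = i
    · subst h; simp
    · simpa [h] using hστ i' (Finset.mem_erase.mpr ⟨h, hi'⟩)
  | ex => exact hφ.elim

theorem IsAtomic.eval_iff_of_isForthSystem {D : ℕ}
    {S : ∀ j, (Fin j → V) → (Fin j → W) → Prop} (hS : IsForthSystem r r' D S) {φ : Fml}
    (hφ : φ.IsAtomic) {j : ℕ} {v : Fin j → V} {w : Fin j → W} (hvw : S j v w) {σ : ℕ → V}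
    {τ : ℕ → W} (hστ : ∀ i ∈ φ.freeVars, ∃ a, σ i = v a ∧ τ i = w a) :
    φ.eval r σ ↔ φ.eval r' τ :=
  hφ.eval_iff fun i hi i' hi' => by
    obtain ⟨a, ha, ha'⟩ := hστ i hi
    obtain ⟨b, hb, hb'⟩ := hστ i' hi'
    rw [ha, ha', hb, hb']
    exact hS.atomic hvw a b

theorem IsExistential.eval_of_isForthSystem {D : ℕ}
    {S : ∀ j, (Fin j → V) → (Fin j → W) → Prop} (hS : IsForthSystem r r' D S) {φ : Fml}
    (hφ : φ.IsExistential) {j : ℕ} (hj : φ.depth + j ≤ D) {v : Fin j → V} {w : Fin j → W}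
    (hvw : S j v w) {σ : ℕ → V} {τ : ℕ → W}
    (hστ : ∀ i ∈ φ.freeVars, ∃ a, σ i = v a ∧ τ i = w a) (hσ : φ.eval r σ) : φ.eval r' τ := by
  induction φ generalizing j σ τ with
  | eq | rel => exact (IsAtomic.eval_iff_of_isForthSystem hS (by trivial) hvw hστ).mp hσ
  | not ψ => exact mt (IsAtomic.eval_iff_of_isForthSystem hS hφ hvw hστ).mpr hσ
  | and ψ χ ih₁ ih₂ =>
    simp only [depth] at hj
    exact ⟨ih₁ hφ.1 (by omega) hvw (fun i hi => hστ i (by simp [freeVars, hi])) hσ.1,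
      ih₂ hφ.2 (by omega) hvw (fun i hi => hστ i (by simp [freeVars, hi])) hσ.2⟩
  | or ψ χ ih₁ ih₂ =>
    simp only [depth] at hj
    exact hσ.imp (ih₁ hφ.1 (by omega) hvw fun i hi => hστ i (by simp [freeVars, hi]))
      (ih₂ hφ.2 (by omega) hvw fun i hi => hστ i (by simp [freeVars, hi]))
  | all => exact hφ.elim
  | ex i ψ ih =>
    simp only [depth] at hj
    obtain ⟨x, hx⟩ := hσ
    obtain ⟨y, hxy⟩ := hS.forth (by omega) hvw x
    refine ⟨y, ih hφ (by omega) hxy (fun i' hi' => ?_) hx⟩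
    by_cases h : i' = i
    · subst h; exact ⟨Fin.last j, by simp⟩
    · obtain ⟨a, ha⟩ := hστ i' (Finset.mem_erase.mpr ⟨h, hi'⟩)
      exact ⟨a.castSucc, by simpa [h] using ha⟩

end Fml

abbrev AtomicType (j : ℕ) : Type := Set (Fin j × Fin j) × Set (Fin j × Fin j)

def RankType : ℕ → ℕ → Type
  | 0, j => AtomicType j
  | k + 1, j => AtomicType j × Set (RankType k (j + 1))

noncomputable instance RankType.instFintype : ∀ k j, Fintype (RankType k j)
  | 0, j => inferInstanceAs (Fintype (AtomicType j))
  | k + 1, j =>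
    have := RankType.instFintype k (j + 1)
    inferInstanceAs (Fintype (AtomicType j × Set (RankType k (j + 1))))

theorem card_atomicType (j : ℕ) : Fintype.card (AtomicType j) = 2 ^ (2 * j ^ 2) := by
  simp [Fintype.card_set, ← pow_add]; ring

theorem card_rankType_succ (k j : ℕ) :
    Fintype.card (RankType (k + 1) j) =
      2 ^ (2 * j ^ 2) * 2 ^ Fintype.card (RankType k (j + 1)) := by
  rw [← card_atomicType, ← Fintype.card_set]
  exact Fintype.card_prod _ _

theorem card_rankType_add_le {k j m : ℕ} (hm : 1 ≤ m) (h : j + k ≤ m) :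
    Fintype.card (RankType k j) + (2 * m ^ 2 + 1) ≤ expIter (k + 1) (3 * m ^ 2) := by
  induction k generalizing j with
  | zero =>
    have hj : 2 ^ (2 * j ^ 2) ≤ 2 ^ (2 * m ^ 2) := Nat.pow_le_pow_right two_pos (by nlinarith)
    have hsum : 2 ^ (2 * m ^ 2) + (2 * m ^ 2 + 1) ≤ 2 ^ (3 * m ^ 2) :=
      calc 2 ^ (2 * m ^ 2) + (2 * m ^ 2 + 1) ≤ 2 ^ (2 * m ^ 2) * 2 := by
            have := Nat.lt_two_pow_self (n := 2 * m ^ 2); omega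
        _ ≤ 2 ^ (3 * m ^ 2) := by
            rw [← pow_succ]; exact Nat.pow_le_pow_right two_pos (by nlinarith)
    show Fintype.card (AtomicType j) + _ ≤ 2 ^ (3 * m ^ 2)
    rw [card_atomicType]; omega
  | succ k ih =>
    have ih := ih (j := j + 1) (by omega)
    have hj : 2 ^ (2 * j ^ 2) ≤ 2 ^ (2 * m ^ 2) := Nat.pow_le_pow_right two_pos (by nlinarith)
    rw [card_rankType_succ, expIter]
    set c := Fintype.card (RankType k (j + 1))
    have h₁ : 2 ^ (2 * j ^ 2) * 2 ^ c ≤ 2 ^ (2 * m ^ 2 + c) := by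
      rw [pow_add]; exact Nat.mul_le_mul_right _ hj
    have h₂ : 2 ^ (2 * m ^ 2 + c + 1) ≤ 2 ^ expIter (k + 1) (3 * m ^ 2) :=
      Nat.pow_le_pow_right two_pos (by omega)
    have := Nat.lt_two_pow_self (n := 2 * m ^ 2 + c)
    rw [pow_succ] at h₂
    omega

section Types

variable {V : Type} (r : V → V → Prop)

def atomicType {j : ℕ} (w : Fin j → V) : AtomicType j :=
  ({p | w p.1 = w p.2}, {p | r (w p.1) (w p.2)})

def rankType : (k : ℕ) → {j : ℕ} → (Fin j → V) → RankType k j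
  | 0, _, w => atomicType r w
  | k + 1, _, w => (atomicType r w, Set.range fun x => rankType k (Fin.snoc w x))

variable {r}

theorem atomicType_eq_of_rankType_eq {k j : ℕ} {v w : Fin j → V}
    (h : rankType r k v = rankType r k w) : atomicType r v = atomicType r w := by
  cases k with
  | zero => exact h
  | succ k => exact congrArg Prod.fst h

theorem eq_iff_and_rel_iff_of_atomicType_eq {j : ℕ} {v w : Fin j → V}
    (h : atomicType r v = atomicType r w) (a b : Fin j) :
    (v a = v b ↔ w a = w b) ∧ (r (v a) (v b) ↔ r (w a) (w b)) :=
  ⟨Set.ext_iff.mp (congrArg Prod.fst h) (a, b), Set.ext_iff.mp (congrArg Prod.snd h) (a, b)⟩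

theorem exists_rankType_snoc_eq {k j : ℕ} {v w : Fin j → V}
    (h : rankType r (k + 1) v = rankType r (k + 1) w) (x : V) :
    ∃ y, rankType r k (Fin.snoc w y) = rankType r k (Fin.snoc v x) := by
  have hrange : Set.range (fun x => rankType r k (Fin.snoc v x)) =
      Set.range (fun y => rankType r k (Fin.snoc w y)) := congrArg Prod.snd h
  show rankType r k (Fin.snoc v x) ∈ Set.range fun y => rankType r k (Fin.snoc w y)
  exact hrange ▸ Set.mem_range_self x

end Types

section Game

attribute [local instance] Classical.propDecidable

variable {V : Type} [Fintype V] [Nonempty V] (r : V → V → Prop) (d : ℕ)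

/- In round `j + 1` there remain `d - j - 1` rounds; `invFun` picks a vertex realizing the
type `t` over `w` whenever some vertex does. -/
noncomputable def gameTuples : (j : ℕ) → Finset (Fin j → V)
  | 0 => univ
  | j + 1 => (gameTuples j).biUnion fun w => univ.image fun t : RankType (d - j - 1) (j + 1) =>
      Fin.snoc w (Function.invFun (fun y => rankType r (d - j - 1) (Fin.snoc w y)) t)

noncomputable def representatives : Finset V :=
  (range d).biUnion fun j => (gameTuples r d (j + 1)).image fun w => w (Fin.last j)

variable {r d}

theorem exists_snoc_mem_gameTuples {j k : ℕ} (hk : d - j = k + 1) {v w : Fin j → V}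
    (hw : w ∈ gameTuples r d j) (h : rankType r (k + 1) v = rankType r (k + 1) w) (x : V) :
    ∃ y, rankType r k (Fin.snoc v x) = rankType r k (Fin.snoc w y) ∧
      Fin.snoc w y ∈ gameTuples r d (j + 1) := by
  obtain rfl : k = d - j - 1 := by omega
  obtain ⟨y, hy⟩ := exists_rankType_snoc_eq h x
  exact ⟨_, (Function.invFun_eq (f := fun y => rankType r (d - j - 1) (Fin.snoc w y)) ⟨y, hy⟩).symm,
    mem_biUnion.mpr ⟨w, hw, mem_image_of_mem _ (mem_univ _)⟩⟩

theorem last_mem_representatives {j : ℕ} (hj : j < d) {w : Fin (j + 1) → V}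
    (hw : w ∈ gameTuples r d (j + 1)) : w (Fin.last j) ∈ representatives r d :=
  mem_biUnion.mpr ⟨j, mem_range.mpr hj, mem_image_of_mem _ hw⟩

theorem card_gameTuples_le {j : ℕ} (hj : j ≤ d) :
    #(gameTuples r d j) ≤ expIter d (3 * d ^ 2) ^ j := by
  induction j with
  | zero => simp [gameTuples]
  | succ j ih =>
    have hT : Fintype.card (RankType (d - j - 1) (j + 1)) ≤ expIter d (3 * d ^ 2) :=
      calc _ ≤ expIter (d - j - 1 + 1) (3 * d ^ 2) :=
            le_of_add_le_left (card_rankType_add_le (by omega) (by omega))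
        _ ≤ expIter d (3 * d ^ 2) := expIter_mono_left _ (by omega)
    calc #(gameTuples r d (j + 1))
        ≤ #(gameTuples r d j) * Fintype.card (RankType (d - j - 1) (j + 1)) :=
          card_biUnion_le_card_mul _ _ _ fun w _ => card_image_le.trans_eq (card_univ)
      _ ≤ expIter d (3 * d ^ 2) ^ j * expIter d (3 * d ^ 2) := Nat.mul_le_mul (ih (by omega)) hT
      _ = _ := (pow_succ ..).symm

theorem card_representatives_le : #(representatives r d) ≤ d * expIter d (3 * d ^ 2) ^ d := by
  calc #(representatives r d) ≤ #(range d) * expIter d (3 * d ^ 2) ^ d := by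
        refine card_biUnion_le_card_mul _ _ _ fun j hj => card_image_le.trans ?_
        have hj : j < d := mem_range.mp hj
        exact (card_gameTuples_le hj).trans
          (Nat.pow_le_pow_right (one_le_expIter d (by nlinarith)) hj)
    _ = _ := by rw [card_range]

variable {U : Set V}

theorem isForthSystem_induced (hU : ↑(representatives r d) ⊆ U) :
    IsForthSystem r (fun a b : U => r a b) d fun j v w =>
      rankType r (d - j) v = rankType r (d - j) (Subtype.val ∘ w) ∧
        Subtype.val ∘ w ∈ gameTuples r d j where
  atomic h a b := by
    simpa [Subtype.ext_iff] using
      eq_iff_and_rel_iff_of_atomicType_eq (atomicType_eq_of_rankType_eq h.1) a b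
  forth {j} _ _ hj h x := by
    have hk : d - j = d - j - 1 + 1 := by omega
    obtain ⟨y, hty, hmem⟩ := exists_snoc_mem_gameTuples hk h.2 (hk ▸ h.1) x
    refine ⟨⟨y, hU (by simpa using last_mem_representatives hj hmem)⟩, ?_⟩
    rw [Fin.comp_snoc]
    exact ⟨hty, hmem⟩

theorem Fml.ZeroAlt.eval_induced (hU : ↑(representatives r d) ⊆ U) {φ : Fml}
    (hφ : φ.ZeroAlt) (hs : φ.freeVars = ∅) (hd : φ.depth ≤ d) {σ : ℕ → V} {τ : ℕ → U}
    (h : φ.eval r σ) : φ.eval (fun a b : U => r a b) τ := by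
  induction φ with
  | eq | rel => simp [Fml.freeVars] at hs
  | not ψ => cases ψ <;> simp_all [Fml.freeVars, Fml.NegAtomic, Fml.IsAtomic, Fml.ZeroAlt]
  | and ψ χ ih₁ ih₂ =>
    simp only [Fml.freeVars, Finset.union_eq_empty, Fml.depth, max_le_iff] at hs hd
    exact ⟨ih₁ ⟨hφ.1.1, fun s hs => hφ.2 s (.inl hs)⟩ hs.1 hd.1 h.1,
      ih₂ ⟨hφ.1.2, fun s hs => hφ.2 s (.inr hs)⟩ hs.2 hd.2 h.2⟩
  | or ψ χ ih₁ ih₂ =>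
    simp only [Fml.freeVars, Finset.union_eq_empty, Fml.depth, max_le_iff] at hs hd
    exact h.imp (ih₁ ⟨hφ.1.1, fun s hs => hφ.2 s (.inl hs)⟩ hs.1 hd.1)
      (ih₂ ⟨hφ.1.2, fun s hs => hφ.2 s (.inr hs)⟩ hs.2 hd.2)
  | all =>
    exact hφ.isUniversal_all.eval_of_embedding Subtype.val_injective (fun _ _ => .rfl)
      (by simp [hs]) h
  | ex =>
    exact hφ.isExistential_ex.eval_of_isForthSystem (isForthSystem_induced hU) (by simpa)
      (v := Fin.elim0) (w := Fin.elim0)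
      ⟨congrArg _ (Subsingleton.elim _ _), Finset.mem_univ _⟩ (by simp [hs]) h

theorem card_le_card_representatives_add_one {φ : Fml} (hφ : φ.ZeroAlt)
    (hdef : DDefines r φ) : Fintype.card V ≤ #(representatives r φ.depth) + 1 := by
  by_contra! hlt
  obtain ⟨v, hv⟩ : ∃ v, v ∉ representatives r φ.depth := by
    by_contra! h
    have := Finset.card_le_card fun x (_ : x ∈ Finset.univ) => h x
    rw [card_univ] at this; omega
  obtain ⟨u, hu⟩ := Fintype.exists_ne_of_one_lt_card (by omega) v
  let U : Set V := {v}ᶜ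
  have hU : ↑(representatives r φ.depth) ⊆ U := fun x hx (hxv : x = v) => hv (hxv ▸ hx)
  refine hdef.2.2 U inferInstance ⟨⟨u, hu⟩⟩ _ (fun ⟨e, _⟩ => ?_)
    fun τ => hφ.eval_induced hU hdef.1 le_rfl (hdef.2.1 (Subtype.val ∘ τ))
  have := Finite.card_subtype_lt (p := (· ∈ U)) (x := v) (by simp [U])
  exact this.ne (Nat.card_congr e).symm

end Game

theorem statement_2 {V : Type} [Fintype V] [Nonempty V] (r : V → V → Prop)
    (φ : Fml) (hφ : φ.ZeroAlt) (hdef : DDefines r φ) :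
    logStar (Fintype.card V) ≤ φ.depth + logStar (logStar (Fintype.card V)) + 1 := by
  set n := Fintype.card V
  set d := φ.depth
  have hn : n ≤ expIter d (3 * d ^ 2 + d + 1) :=
    (card_le_card_representatives_add_one hφ hdef).trans <|
      (Nat.add_le_add_right (card_representatives_le (r := r)) 1).trans
        (mul_expIter_pow_add_one_le_expIter d)
  have hlog : logStar n ≤ d + logStar (d + 2) + 1 :=
    calc logStar n ≤ d + logStar (3 * d ^ 2 + d + 1) :=
          (logStar_mono hn).trans (logStar_expIter_le ..)
      _ ≤ d + (logStar (d + 2) + 1) :=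
          Nat.add_le_add_left (logStar_le_of_lt_two_pow (three_mul_sq_add_lt_two_pow d)) d
  by_cases h : logStar n ≤ d + 1
  · omega
  · have := logStar_mono (show d + 2 ≤ logStar n by omega)
    omega

end PaperFO
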